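/- Let (p_n), (q_n) satisfy 0 < q_n < p_n ≤ 1 with [n]_{p_n,q_n} → ∞, and fix α, β with 0 ≤ α ≤ β. Then for every f ∈ C[0,1], sup_{x∈[0,1]} |S_{n,p_n,q_n}(f; x) − f(x)| → 0 as n → ∞. -/
import Mathlib

open Finset

noncomputable def pqInt (p q : ℝ) (m : ℕ) : ℝ :=
  ∑ i ∈ Finset.range m, p ^ (m - 1 - i) * q ^ i

noncomputable def pqFact (p q : ℝ) (n : ℕ) : ℝ :=
  ∏ j ∈ Finset.range n, pqInt p q (j + 1)

noncomputable def pqChoose (p q : ℝ) (n k : ℕ) : ℝ :=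
  pqFact p q n / (pqFact p q k * pqFact p q (n - k))

noncomputable def pqBasis (p q : ℝ) (n k : ℕ) (x : ℝ) : ℝ :=
  pqChoose p q n k * (p ^ (k * (k - 1) / 2) / p ^ (n * (n - 1) / 2)) * x ^ k *
    ∏ s ∈ Finset.range (n - k), (p ^ s - q ^ s * x)

noncomputable def pqNode (p q α β : ℝ) (n k : ℕ) : ℝ :=
  (p ^ (n - k) * pqInt p q k + α) / (pqInt p q n + β)

noncomputable def pqStancu (p q α β : ℝ) (n : ℕ) (f : ℝ → ℝ) (x : ℝ) : ℝ :=
  ∑ k ∈ Finset.range (n + 1), pqBasis p q n k x * f (pqNode p q α β n k)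

-- auxiliary
noncomputable def pqC (p q : ℝ) (n k : ℕ) : ℝ :=
  if k ≤ n then pqChoose p q n k else 0

noncomputable def pqP (p q : ℝ) (m : ℕ) (x : ℝ) : ℝ :=
  ∏ s ∈ Finset.range m, (p ^ s - q ^ s * x)

noncomputable def pqW (p q : ℝ) (n k : ℕ) (x : ℝ) : ℝ :=
  pqC p q n k * p ^ (k * (k - 1) / 2) * x ^ k * pqP p q (n - k) x

lemma tri_succ (k : ℕ) : (k + 1) * ((k + 1) - 1) / 2 = k * (k - 1) / 2 + k := by
  cases k with
  | zero => rfl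
  | succ m =>
      show (m + 2) * (m + 1) / 2 = (m + 1) * m / 2 + (m + 1)
      rw [show (m + 2) * (m + 1) = (m + 1) * m + 2 * (m + 1) by ring,
        Nat.add_mul_div_left _ _ (by norm_num : 0 < 2)]

lemma pow_tri_succ (p : ℝ) (k : ℕ) :
    p ^ ((k + 1) * ((k + 1) - 1) / 2) = p ^ k * p ^ (k * (k - 1) / 2) := by
  rw [tri_succ, pow_add, mul_comm]

section basic
variable {p q : ℝ}

lemma pqInt_zero : pqInt p q 0 = 0 := by simp [pqInt]

lemma pqInt_one : pqInt p q 1 = 1 := by simp [pqInt]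

lemma pqInt_succ_left (m : ℕ) : pqInt p q (m + 1) = p ^ m + q * pqInt p q m := by
  unfold pqInt
  rw [Finset.sum_range_succ', Finset.mul_sum, add_comm]
  simp only [Nat.add_sub_cancel, Nat.sub_zero, pow_zero, mul_one]
  congr 1
  refine Finset.sum_congr rfl fun i hi => ?_
  have hi' := Finset.mem_range.mp hi
  rw [show m - (i + 1) = (m - 1 - i) by omega]
  ring

lemma pqInt_succ_right (m : ℕ) : pqInt p q (m + 1) = p * pqInt p q m + q ^ m := by
  unfold pqInt
  rw [Finset.sum_range_succ, Finset.mul_sum]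
  simp only [Nat.add_sub_cancel, Nat.sub_self, pow_zero, one_mul]
  congr 1
  refine Finset.sum_congr rfl fun i hi => ?_
  have hi' := Finset.mem_range.mp hi
  rw [show m - i = (m - 1 - i) + 1 by omega, pow_succ]
  ring

lemma pqInt_nonneg (hp : 0 ≤ p) (hq : 0 ≤ q) (m : ℕ) : 0 ≤ pqInt p q m := by
  unfold pqInt
  exact Finset.sum_nonneg fun i _ => mul_nonneg (pow_nonneg hp _) (pow_nonneg hq _)

lemma pqInt_pos (hp : 0 < p) (hq : 0 < q) {m : ℕ} (hm : 0 < m) : 0 < pqInt p q m := by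
  obtain ⟨m, rfl⟩ : ∃ m', m = m' + 1 := ⟨m - 1, by omega⟩
  rw [pqInt_succ_left]
  have := pqInt_nonneg hp.le hq.le m
  positivity

lemma pqInt_add (a b : ℕ) :
    pqInt p q (a + b) = p ^ b * pqInt p q a + q ^ a * pqInt p q b := by
  induction b with
  | zero => simp [pqInt_zero]
  | succ b ih =>
      rw [show a + (b + 1) = (a + b) + 1 by omega, pqInt_succ_left, pqInt_succ_left, ih,
        pow_add, pow_succ]
      have h1 : p ^ a + q * pqInt p q a = p * pqInt p q a + q ^ a := by
        rw [← pqInt_succ_left, ← pqInt_succ_right]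
      linear_combination p ^ b * h1

lemma pqFact_succ (n : ℕ) : pqFact p q (n + 1) = pqFact p q n * pqInt p q (n + 1) :=
  Finset.prod_range_succ _ _

lemma pqFact_pos (hp : 0 < p) (hq : 0 < q) (n : ℕ) : 0 < pqFact p q n :=
  Finset.prod_pos fun i _ => pqInt_pos hp hq (Nat.succ_pos i)

lemma pqFact_zero : pqFact p q 0 = 1 := rfl

lemma pqC_pos (hp : 0 < p) (hq : 0 < q) {n k : ℕ} (h : k ≤ n) : 0 < pqC p q n k := by
  rw [pqC, if_pos h, pqChoose]
  exact div_pos (pqFact_pos hp hq n) (mul_pos (pqFact_pos hp hq k) (pqFact_pos hp hq (n - k)))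

lemma pqC_nonneg (hp : 0 < p) (hq : 0 < q) (n k : ℕ) : 0 ≤ pqC p q n k := by
  by_cases h : k ≤ n
  · exact (pqC_pos hp hq h).le
  · rw [pqC, if_neg h]

lemma pqC_zero (hp : 0 < p) (hq : 0 < q) (n : ℕ) : pqC p q n 0 = 1 := by
  rw [pqC, if_pos (Nat.zero_le n), pqChoose, pqFact_zero]
  rw [Nat.sub_zero, one_mul, div_self (pqFact_pos hp hq n).ne']

lemma pqC_self (hp : 0 < p) (hq : 0 < q) (n : ℕ) : pqC p q n n = 1 := by
  rw [pqC, if_pos le_rfl, pqChoose, Nat.sub_self, pqFact_zero, mul_one,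
    div_self (pqFact_pos hp hq n).ne']

lemma pqC_of_gt {n k : ℕ} (h : n < k) : pqC p q n k = 0 := by
  rw [pqC, if_neg (by omega)]

end basic
section pascal
variable {p q : ℝ}

lemma pqC_pascal (hp : 0 < p) (hq : 0 < q) (n k : ℕ) :
    pqC p q (n + 1) (k + 1)
      = p ^ (k + 1) * pqC p q n (k + 1) + q ^ (n - k) * pqC p q n k := by
  rcases lt_trichotomy k n with h | h | h
  · have h1 : k + 1 ≤ n := h
    rw [pqC, if_pos (by omega : k + 1 ≤ n + 1), pqC, if_pos h1, pqC, if_pos h.le]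
    unfold pqChoose
    have e1 : n + 1 - (k + 1) = n - k := by omega
    have e2 : n - (k + 1) = (n - k) - 1 := by omega
    have e3 : n - k = ((n - k) - 1) + 1 := by omega
    rw [e1, e2, pqFact_succ n, pqFact_succ k]
    rw [show pqFact p q (n - k) = pqFact p q ((n - k) - 1) * pqInt p q (n - k) by
      rw [e3, pqFact_succ, ← e3]]
    have key : pqInt p q (n + 1)
        = p ^ (k + 1) * pqInt p q (n - k) + q ^ (n - k) * pqInt p q (k + 1) := by
      rw [show n + 1 = (n - k) + (k + 1) by omega, pqInt_add]
    have f1 := (pqFact_pos hp hq n).ne'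
    have f2 := (pqFact_pos hp hq k).ne'
    have f3 := (pqFact_pos hp hq ((n - k) - 1)).ne'
    have i1 : pqInt p q (k + 1) ≠ 0 := (pqInt_pos hp hq (by omega)).ne'
    have i2 : pqInt p q (n - k) ≠ 0 := (pqInt_pos hp hq (by omega)).ne'
    rw [key]
    field_simp
  · subst h
    rw [pqC_self hp hq, pqC_of_gt (by omega), Nat.sub_self, pow_zero, pqC_self hp hq]
    ring
  · rw [pqC_of_gt (by omega), pqC_of_gt (by omega), pqC_of_gt (by omega)]
    ring

lemma pqC_mul_int (hp : 0 < p) (hq : 0 < q) (n k : ℕ) :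
    pqC p q (n + 1) (k + 1) * pqInt p q (k + 1)
      = pqInt p q (n + 1) * pqC p q n k := by
  by_cases h : k ≤ n
  · rw [pqC, if_pos (by omega : k + 1 ≤ n + 1), pqC, if_pos h]
    unfold pqChoose
    have e1 : n + 1 - (k + 1) = n - k := by omega
    rw [e1, pqFact_succ n, pqFact_succ k]
    have f1 := (pqFact_pos hp hq n).ne'
    have f2 := (pqFact_pos hp hq k).ne'
    have f3 := (pqFact_pos hp hq (n - k)).ne'
    have i1 : pqInt p q (k + 1) ≠ 0 := (pqInt_pos hp hq (by omega)).ne'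
    field_simp
  · rw [pqC_of_gt (by omega), pqC_of_gt (by omega : n < k)]
    ring

end pascal
section sums
variable {p q : ℝ}

lemma pqP_succ (m : ℕ) (x : ℝ) :
    pqP p q (m + 1) x = pqP p q m x * (p ^ m - q ^ m * x) :=
  Finset.prod_range_succ _ _

lemma pqW_zero (hp : 0 < p) (hq : 0 < q) (n : ℕ) (x : ℝ) :
    pqW p q n 0 x = pqP p q n x := by
  simp [pqW, pqC_zero hp hq]

lemma pqW_top (n : ℕ) (x : ℝ) : pqW p q n (n + 1) x = 0 := by
  simp [pqW, pqC_of_gt (Nat.lt_succ_self n)]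

lemma pqW_step (hp : 0 < p) (hq : 0 < q) {n k : ℕ} (hk : k ≤ n) (x : ℝ) :
    pqW p q (n + 1) (k + 1) x
      = p ^ n * pqW p q n (k + 1) x
        - p ^ (k + 1) * q ^ (n - k - 1) * pqC p q n (k + 1) * p ^ ((k + 1) * k / 2)
            * x ^ (k + 2) * pqP p q (n - k - 1) x
        + q ^ (n - k) * pqC p q n k * p ^ ((k + 1) * k / 2) * x ^ (k + 1)
            * pqP p q (n - k) x := by
  rcases eq_or_lt_of_le hk with rfl | hlt
  · simp only [pqW, Nat.sub_self, Nat.add_sub_cancel]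
    rw [pqC_pascal hp hq, pqC_of_gt (Nat.lt_succ_self k)]
    simp only [Nat.sub_self]
    ring
  · obtain ⟨m, rfl⟩ : ∃ m, n = k + 1 + m := ⟨n - k - 1, by omega⟩
    simp only [pqW, show k + 1 + m - (k + 1) = m by omega,
      show k + 1 + m - k = m + 1 by omega, show k + 1 + m - k - 1 = m by omega,
      show k + 1 + m + 1 - (k + 1) = m + 1 by omega, Nat.add_sub_cancel]
    rw [pqC_pascal hp hq, show k + 1 + m - k = m + 1 by omega, pqP_succ,
      show k + 1 + m = (k + 1) + m by omega, pow_add]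
    ring

lemma sum_pqW (hp : 0 < p) (hq : 0 < q) (n : ℕ) (x : ℝ) :
    ∑ k ∈ Finset.range (n + 1), pqW p q n k x = p ^ (n * (n - 1) / 2) := by
  induction n with
  | zero => simp [pqW, pqC_zero hp hq, pqP]
  | succ n ih =>
      have hWsucc : ∑ k ∈ Finset.range (n + 1), pqW p q n (k + 1) x
          = p ^ (n * (n - 1) / 2) - pqP p q n x := by
        have h1 : ∑ k ∈ Finset.range (n + 2), pqW p q n k x
            = p ^ (n * (n - 1) / 2) := by
          rw [Finset.sum_range_succ, ih, pqW_top, add_zero]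
        rw [Finset.sum_range_succ', pqW_zero hp hq] at h1
        linarith
      have hsplit : ∑ k ∈ Finset.range (n + 2), pqW p q (n + 1) k x
          = ∑ k ∈ Finset.range (n + 1), pqW p q (n + 1) (k + 1) x
            + pqP p q (n + 1) x := by
        rw [Finset.sum_range_succ', pqW_zero hp hq]
      rw [hsplit]
      rw [Finset.sum_congr rfl fun k hk =>
        pqW_step hp hq (Finset.mem_range_succ_iff.mp hk) x (p := p) (q := q)]
      rw [Finset.sum_add_distrib, Finset.sum_sub_distrib, ← Finset.mul_sum, hWsucc]
      -- now match the a2-sum and the b-sum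
      have hmatch : ∑ k ∈ Finset.range (n + 1),
            p ^ (k + 1) * q ^ (n - k - 1) * pqC p q n (k + 1) * p ^ ((k + 1) * k / 2)
              * x ^ (k + 2) * pqP p q (n - k - 1) x
          = ∑ k ∈ Finset.range (n + 1),
              q ^ (n - k) * pqC p q n k * p ^ ((k + 1) * k / 2) * x ^ (k + 1)
                * pqP p q (n - k) x
            - q ^ n * x * pqP p q n x := by
        rw [Finset.sum_range_succ' (fun k => q ^ (n - k) * pqC p q n k
          * p ^ ((k + 1) * k / 2) * x ^ (k + 1) * pqP p q (n - k) x) n]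
        rw [Finset.sum_range_succ]
        rw [pqC_of_gt (Nat.lt_succ_self n)]
        have e0 : q ^ (n - 0) * pqC p q n 0 * p ^ ((0 + 1) * 0 / 2) * x ^ (0 + 1)
            * pqP p q (n - 0) x = q ^ n * x * pqP p q n x := by
          rw [pqC_zero hp hq]
          norm_num
        rw [e0]
        have hcong : ∀ k ∈ Finset.range n,
            p ^ (k + 1) * q ^ (n - k - 1) * pqC p q n (k + 1) * p ^ ((k + 1) * k / 2)
              * x ^ (k + 2) * pqP p q (n - k - 1) x
            = q ^ (n - (k + 1)) * pqC p q n (k + 1) * p ^ ((k + 1 + 1) * (k + 1) / 2)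
              * x ^ (k + 1 + 1) * pqP p q (n - (k + 1)) x := by
          intro k hk
          rw [show n - (k + 1) = n - k - 1 by omega,
            show (k + 1 + 1) * (k + 1) / 2 = (k + 1) * k / 2 + (k + 1) by
              have := tri_succ (k + 1); simpa using this,
            pow_add]
          ring
        rw [Finset.sum_congr rfl hcong]
        ring
      rw [hmatch, pqP_succ]
      rw [show (n + 1) * ((n + 1) - 1) / 2 = n * (n - 1) / 2 + n from tri_succ n, pow_add]
      ring
end sums
section moments
variable {p q : ℝ}

lemma pow_tri_succ' (p : ℝ) (k : ℕ) :
    p ^ ((k + 1) * k / 2) = p ^ k * p ^ (k * (k - 1) / 2) := by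
  have := pow_tri_succ p k
  simpa using this

lemma pqW_mom1_term (hp : 0 < p) (hq : 0 < q) {n k : ℕ} (hk : k ≤ n) (x : ℝ) :
    pqW p q (n + 1) (k + 1) x * (p ^ (n - k) * pqInt p q (k + 1))
      = pqInt p q (n + 1) * p ^ n * x * pqW p q n k x := by
  obtain ⟨j, rfl⟩ : ∃ j, n = k + j := ⟨n - k, by omega⟩
  have h1 := pqC_mul_int hp hq (k + j) k (p := p) (q := q)
  simp only [pqW, show k + j + 1 - (k + 1) = j by omega, show k + j - k = j by omega,
    Nat.add_sub_cancel]
  rw [pow_tri_succ', show k + j = k + j from rfl, pow_add (p) k j]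
  linear_combination (p ^ k * p ^ (k * (k - 1) / 2) * x ^ (k + 1) * pqP p q j x * p ^ j) * h1

lemma sum_pqW_mom1 (hp : 0 < p) (hq : 0 < q) (n : ℕ) (x : ℝ) :
    ∑ k ∈ Finset.range (n + 2), pqW p q (n + 1) k x * (p ^ (n + 1 - k) * pqInt p q k)
      = pqInt p q (n + 1) * x * p ^ ((n + 1) * ((n + 1) - 1) / 2) := by
  rw [Finset.sum_range_succ']
  have h0 : pqW p q (n + 1) 0 x * (p ^ (n + 1 - 0) * pqInt p q 0) = 0 := by
    rw [pqInt_zero]; ring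
  rw [h0, add_zero]
  have hcong : ∀ k ∈ Finset.range (n + 1),
      pqW p q (n + 1) (k + 1) x * (p ^ (n + 1 - (k + 1)) * pqInt p q (k + 1))
        = pqInt p q (n + 1) * p ^ n * x * pqW p q n k x := by
    intro k hk
    rw [show n + 1 - (k + 1) = n - k by omega]
    exact pqW_mom1_term hp hq (Finset.mem_range_succ_iff.mp hk) x
  rw [Finset.sum_congr rfl hcong, ← Finset.mul_sum, sum_pqW hp hq,
    show (n + 1) * ((n + 1) - 1) / 2 = n * (n - 1) / 2 + n from tri_succ n, pow_add]
  ring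

lemma pqW_mom2_term (hp : 0 < p) (hq : 0 < q) {n k : ℕ} (hk : k ≤ n) (x : ℝ) :
    pqW p q (n + 1) (k + 1) x * (p ^ (n - k) * pqInt p q (k + 1)) ^ 2
      = pqInt p q (n + 1) * p ^ (2 * n) * x * pqW p q n k x
        + q * pqInt p q (n + 1) * (pqC p q n k * pqInt p q k) * p ^ ((k + 1) * k / 2)
            * p ^ (2 * (n - k)) * x ^ (k + 1) * pqP p q (n - k) x := by
  obtain ⟨j, rfl⟩ : ∃ j, n = k + j := ⟨n - k, by omega⟩
  have h1 := pqC_mul_int hp hq (k + j) k (p := p) (q := q)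
  have hsl := pqInt_succ_left (p := p) (q := q) k
  simp only [pqW, show k + j + 1 - (k + 1) = j by omega, show k + j - k = j by omega,
    Nat.add_sub_cancel]
  rw [pow_tri_succ', show 2 * (k + j) = k + k + (j + j) by omega,
    show 2 * j = j + j by omega]
  simp only [pow_add]
  linear_combination
    (pqInt p q (k + 1) * (p ^ k * p ^ (k * (k - 1) / 2) * x ^ (k + 1) * pqP p q j x
      * (p ^ j * p ^ j))) * h1
    + (pqInt p q (k + j + 1) * pqC p q (k + j) k * (p ^ k * p ^ (k * (k - 1) / 2)
      * x ^ (k + 1) * pqP p q j x * (p ^ j * p ^ j))) * hsl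

lemma pqW_mom2_shift (hp : 0 < p) (hq : 0 < q) {m k : ℕ} (hk : k ≤ m) (x : ℝ) :
    pqC p q (m + 1) (k + 1) * pqInt p q (k + 1) * p ^ ((k + 2) * (k + 1) / 2)
        * p ^ (2 * (m - k)) * x ^ (k + 2) * pqP p q (m - k) x
      = pqInt p q (m + 1) * p ^ (2 * m + 1) * x ^ 2 * pqW p q m k x := by
  obtain ⟨j, rfl⟩ : ∃ j, m = k + j := ⟨m - k, by omega⟩
  have h1 := pqC_mul_int hp hq (k + j) k (p := p) (q := q)
  simp only [pqW, show k + j - k = j by omega]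
  rw [show (k + 2) * (k + 1) / 2 = (k + 1) * k / 2 + (k + 1) from tri_succ (k + 1),
    pow_add, pow_tri_succ', show 2 * (k + j) + 1 = k + k + (j + j) + 1 by omega,
    show 2 * j = j + j by omega]
  simp only [pow_add, pow_succ, pow_one]
  linear_combination (p ^ (k * (k - 1) / 2) * p ^ k * p ^ k * p * x ^ (k + 2)
    * pqP p q j x * (p ^ j * p ^ j)) * h1

lemma sum_pqW_mom2 (hp : 0 < p) (hq : 0 < q) (n : ℕ) (x : ℝ) :
    ∑ k ∈ Finset.range (n + 2), pqW p q (n + 1) k x * (p ^ (n + 1 - k) * pqInt p q k) ^ 2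
      = (q * pqInt p q (n + 1) * pqInt p q n * x ^ 2 + p ^ n * pqInt p q (n + 1) * x)
          * p ^ ((n + 1) * ((n + 1) - 1) / 2) := by
  rw [Finset.sum_range_succ']
  have h0 : pqW p q (n + 1) 0 x * (p ^ (n + 1 - 0) * pqInt p q 0) ^ 2 = 0 := by
    rw [pqInt_zero]; ring
  rw [h0, add_zero]
  have hcong : ∀ k ∈ Finset.range (n + 1),
      pqW p q (n + 1) (k + 1) x * (p ^ (n + 1 - (k + 1)) * pqInt p q (k + 1)) ^ 2
        = pqInt p q (n + 1) * p ^ (2 * n) * x * pqW p q n k x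
          + q * pqInt p q (n + 1) * (pqC p q n k * pqInt p q k) * p ^ ((k + 1) * k / 2)
              * p ^ (2 * (n - k)) * x ^ (k + 1) * pqP p q (n - k) x := by
    intro k hk
    rw [show n + 1 - (k + 1) = n - k by omega]
    exact pqW_mom2_term hp hq (Finset.mem_range_succ_iff.mp hk) x
  rw [Finset.sum_congr rfl hcong, Finset.sum_add_distrib, ← Finset.mul_sum, sum_pqW hp hq]
  have hB : ∑ k ∈ Finset.range (n + 1),
      q * pqInt p q (n + 1) * (pqC p q n k * pqInt p q k) * p ^ ((k + 1) * k / 2)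
        * p ^ (2 * (n - k)) * x ^ (k + 1) * pqP p q (n - k) x
      = q * pqInt p q (n + 1) * pqInt p q n * x ^ 2
          * p ^ ((n + 1) * ((n + 1) - 1) / 2) := by
    cases n with
    | zero =>
        simp [pqInt_zero, pqInt_one]
    | succ m =>
        rw [Finset.sum_range_succ']
        have hz : q * pqInt p q (m + 1 + 1) * (pqC p q (m + 1) 0 * pqInt p q 0)
            * p ^ ((0 + 1) * 0 / 2) * p ^ (2 * (m + 1 - 0)) * x ^ (0 + 1)
            * pqP p q (m + 1 - 0) x = 0 := by
          rw [pqInt_zero]; ring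
        rw [hz, add_zero]
        have hcong2 : ∀ k ∈ Finset.range (m + 1),
            q * pqInt p q (m + 1 + 1) * (pqC p q (m + 1) (k + 1) * pqInt p q (k + 1))
              * p ^ ((k + 1 + 1) * (k + 1) / 2) * p ^ (2 * (m + 1 - (k + 1)))
              * x ^ (k + 1 + 1) * pqP p q (m + 1 - (k + 1)) x
            = q * pqInt p q (m + 2)
                * (pqInt p q (m + 1) * p ^ (2 * m + 1) * x ^ 2 * pqW p q m k x) := by
          intro k hk
          have hs := pqW_mom2_shift hp hq (Finset.mem_range_succ_iff.mp hk) x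
            (p := p) (q := q)
          rw [show m + 1 - (k + 1) = m - k by omega,
            show k + 1 + 1 = k + 2 by omega]
          linear_combination (q * pqInt p q (m + 1 + 1)) * hs
        rw [Finset.sum_congr rfl hcong2, ← Finset.mul_sum, ← Finset.mul_sum, sum_pqW hp hq]
        rw [show (m + 1 + 1) * ((m + 1 + 1) - 1) / 2 = (m + 1) * m / 2 + (m + 1) from
            tri_succ (m + 1)]
        rw [show 2 * m + 1 = m + (m + 1) by omega, pow_add p m (m + 1),
          pow_add p ((m + 1) * m / 2) (m + 1), pow_tri_succ' p m]
        ring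
  rw [hB, show (n + 1) * ((n + 1) - 1) / 2 = n * (n - 1) / 2 + n from tri_succ n]
  simp only [pow_add, two_mul]
  ring
end moments
section central
variable {p q : ℝ}

lemma pqP_nonneg (hq : 0 < q) (hqp : q < p) (m : ℕ) {x : ℝ}
    (hx0 : 0 ≤ x) (hx1 : x ≤ 1) : 0 ≤ pqP p q m x := by
  unfold pqP
  refine Finset.prod_nonneg fun s _ => ?_
  have h1 : q ^ s * x ≤ q ^ s := by
    nlinarith [pow_pos hq s]
  have h2 : q ^ s ≤ p ^ s := pow_le_pow_left₀ hq.le hqp.le s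
  linarith

lemma pqW_nonneg (hq : 0 < q) (hqp : q < p) (n k : ℕ) {x : ℝ}
    (hx0 : 0 ≤ x) (hx1 : x ≤ 1) : 0 ≤ pqW p q n k x := by
  have hp : 0 < p := hq.trans hqp
  exact mul_nonneg (mul_nonneg (mul_nonneg (pqC_nonneg hp hq n k)
    (pow_nonneg hp.le _)) (pow_nonneg hx0 _)) (pqP_nonneg hq hqp _ hx0 hx1)

lemma sum_pqW_central (hp : 0 < p) (hq : 0 < q) (m : ℕ) (x α β : ℝ)
    (hc : pqInt p q (m + 1) + β ≠ 0) :
    ∑ k ∈ Finset.range (m + 2), pqW p q (m + 1) k x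
        * (pqNode p q α β (m + 1) k - x) ^ 2
      = (q * pqInt p q (m + 1) * pqInt p q m * x ^ 2 + p ^ m * pqInt p q (m + 1) * x
          + 2 * (α - (pqInt p q (m + 1) + β) * x) * (pqInt p q (m + 1) * x)
          + (α - (pqInt p q (m + 1) + β) * x) ^ 2)
        * p ^ ((m + 1) * ((m + 1) - 1) / 2) / (pqInt p q (m + 1) + β) ^ 2 := by
  set c : ℝ := pqInt p q (m + 1) + β with hcdef
  have hterm : ∀ k ∈ Finset.range (m + 2),
      pqW p q (m + 1) k x * (pqNode p q α β (m + 1) k - x) ^ 2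
        = (pqW p q (m + 1) k x * (p ^ (m + 1 - k) * pqInt p q k) ^ 2
            + 2 * (α - c * x) * (pqW p q (m + 1) k x * (p ^ (m + 1 - k) * pqInt p q k))
            + (α - c * x) ^ 2 * pqW p q (m + 1) k x) / c ^ 2 := by
    intro k _
    rw [pqNode, ← hcdef]
    field_simp
    ring
  rw [Finset.sum_congr rfl hterm, ← Finset.sum_div, Finset.sum_add_distrib,
    Finset.sum_add_distrib, ← Finset.mul_sum, ← Finset.mul_sum,
    sum_pqW_mom2 hp hq, sum_pqW_mom1 hp hq, sum_pqW hp hq]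
  field_simp

lemma central_bound (hp : 0 < p) (hq : 0 < q) (m : ℕ) {x α β : ℝ}
    (hx0 : 0 ≤ x) (hx1 : x ≤ 1) (hα : 0 ≤ α) (hαβ : α ≤ β)
    (hJ : 1 ≤ pqInt p q (m + 1)) (hp1 : p ≤ 1) :
    q * pqInt p q (m + 1) * pqInt p q m * x ^ 2 + p ^ m * pqInt p q (m + 1) * x
        + 2 * (α - (pqInt p q (m + 1) + β) * x) * (pqInt p q (m + 1) * x)
        + (α - (pqInt p q (m + 1) + β) * x) ^ 2
      ≤ α ^ 2 + β ^ 2 + pqInt p q (m + 1) / 4 := by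
  set J : ℝ := pqInt p q (m + 1) with hJdef
  have hsub : q * pqInt p q m = J - p ^ m := by
    rw [hJdef, pqInt_succ_left]; ring
  have hqm : q * pqInt p q m = J - p ^ m := hsub
  have hP0 : 0 < p ^ m := pow_pos hp m
  have hP1 : p ^ m ≤ 1 := pow_le_one₀ hp.le hp1
  have hE : q * J * pqInt p q m * x ^ 2 + p ^ m * J * x
      + 2 * (α - (J + β) * x) * (J * x) + (α - (J + β) * x) ^ 2
      = β ^ 2 * x ^ 2 + p ^ m * J * (x - x ^ 2) - 2 * α * β * x + α ^ 2 := by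
    linear_combination (J * x ^ 2) * hsub
  rw [hE]
  have hβ : 0 ≤ β := hα.trans hαβ
  have hJ0 : (0 : ℝ) < J := lt_of_lt_of_le one_pos hJ
  have h1 : x ^ 2 ≤ 1 := by nlinarith
  have h2 : β ^ 2 * x ^ 2 ≤ β ^ 2 := by nlinarith [sq_nonneg β]
  have h3 : 0 ≤ α * β * x := mul_nonneg (mul_nonneg hα hβ) hx0
  have h4 : x - x ^ 2 ≤ 1 / 4 := by nlinarith [sq_nonneg (1 - 2 * x)]
  have h5 : 0 ≤ x - x ^ 2 := by nlinarith
  have h6 : p ^ m * (x - x ^ 2) ≤ 1 / 4 := by nlinarith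
  have h7 : p ^ m * J * (x - x ^ 2) ≤ J / 4 := by nlinarith
  linarith
end central
set_option maxHeartbeats 1000000 in
theorem pqStancu_uniform_convergence (p q : ℕ → ℝ)
    (hq : ∀ n, 0 < q n) (hqp : ∀ n, q n < p n) (hp : ∀ n, p n ≤ 1)
    (hdiv : Filter.Tendsto (fun n => pqInt (p n) (q n) n) Filter.atTop Filter.atTop)
    (α β : ℝ) (hα : 0 ≤ α) (hαβ : α ≤ β)
    (f : ℝ → ℝ) (hf : ContinuousOn f (Set.Icc (0 : ℝ) 1)) :
    ∀ ε > 0, ∃ N : ℕ, ∀ n ≥ N, ∀ x ∈ Set.Icc (0 : ℝ) 1,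
      |pqStancu (p n) (q n) α β n f x - f x| < ε := by
  intro ε hε
  have hβ : 0 ≤ β := hα.trans hαβ
  obtain ⟨M, hM⟩ := isCompact_Icc.exists_bound_of_continuousOn hf
  have hM0 : 0 ≤ M := (norm_nonneg _).trans (hM 0 (by norm_num))
  have huc : UniformContinuousOn f (Set.Icc 0 1) :=
    isCompact_Icc.uniformContinuousOn_of_continuous hf
  rw [Metric.uniformContinuousOn_iff] at huc
  obtain ⟨δ, hδ0, hδ⟩ := huc (ε / 2) (by linarith)
  obtain ⟨Z, hZdef⟩ : ∃ Z : ℝ, Z = 4 * M * (α ^ 2 + β ^ 2 + 1) / (δ ^ 2 * ε) :=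
    ⟨_, rfl⟩
  have hZ0 : 0 ≤ Z := by rw [hZdef]; positivity
  obtain ⟨K, hKdef⟩ : ∃ K : ℝ, K = max 1 (Z + 1) := ⟨_, rfl⟩
  have hK1 : (1 : ℝ) ≤ K := by rw [hKdef]; exact le_max_left _ _
  have hKZ : Z + 1 ≤ K := by rw [hKdef]; exact le_max_right _ _
  obtain ⟨N1, hN1⟩ := Filter.eventually_atTop.mp (hdiv.eventually_ge_atTop K)
  refine ⟨max N1 1, fun n hn x hx => ?_⟩
  obtain ⟨hx0, hx1⟩ := hx
  obtain ⟨m, rfl⟩ : ∃ m, n = m + 1 := ⟨n - 1, by omega⟩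
  set pp : ℝ := p (m + 1) with hpp
  set qq : ℝ := q (m + 1) with hqq
  have hq0 : 0 < qq := hq (m + 1)
  have hqp' : qq < pp := hqp (m + 1)
  have hp0 : 0 < pp := hq0.trans hqp'
  have hp1 : pp ≤ 1 := hp (m + 1)
  obtain ⟨J, hJdef⟩ : ∃ J : ℝ, J = pqInt pp qq (m + 1) := ⟨_, rfl⟩
  have hJK : K ≤ J := by
    rw [hJdef]; exact hN1 (m + 1) (le_trans (le_max_left _ _) hn)
  have hJ1 : (1 : ℝ) ≤ J := le_trans hK1 hJK
  have hJZ : Z + 1 ≤ J := le_trans hKZ hJK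
  have hJ0 : (0 : ℝ) < J := lt_of_lt_of_le one_pos hJ1
  obtain ⟨c, hcdef⟩ : ∃ c : ℝ, c = J + β := ⟨_, rfl⟩
  have hc0 : (0 : ℝ) < c := by rw [hcdef]; linarith
  have hcne : c ≠ 0 := hc0.ne'
  obtain ⟨P, hPdef⟩ : ∃ P : ℝ, P = pp ^ ((m + 1) * ((m + 1) - 1) / 2) := ⟨_, rfl⟩
  have hP0 : (0 : ℝ) < P := by rw [hPdef]; exact pow_pos hp0 _
  have hPne : P ≠ 0 := hP0.ne'
  -- basis = W / P
  have hbasis : ∀ k ∈ Finset.range (m + 2),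
      pqBasis pp qq (m + 1) k x = pqW pp qq (m + 1) k x / P := by
    intro k hk
    rw [hPdef, pqBasis, pqW, pqC, if_pos (Finset.mem_range_succ_iff.mp hk), pqP]
    ring
  -- nodes lie in [0,1]
  have hnode : ∀ k ∈ Finset.range (m + 2),
      pqNode pp qq α β (m + 1) k ∈ Set.Icc (0 : ℝ) 1 := by
    intro k hk
    have hk' : k ≤ m + 1 := Finset.mem_range_succ_iff.mp hk
    have hu0 : 0 ≤ pp ^ (m + 1 - k) * pqInt pp qq k :=
      mul_nonneg (pow_nonneg hp0.le _) (pqInt_nonneg hp0.le hq0.le k)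
    have huJ : pp ^ (m + 1 - k) * pqInt pp qq k ≤ J := by
      have hadd := pqInt_add (p := pp) (q := qq) k (m + 1 - k)
      rw [show k + (m + 1 - k) = m + 1 by omega] at hadd
      have h2 : 0 ≤ qq ^ k * pqInt pp qq (m + 1 - k) :=
        mul_nonneg (pow_nonneg hq0.le _) (pqInt_nonneg hp0.le hq0.le _)
      rw [hJdef, hadd]
      linarith
    rw [pqNode, ← hJdef, ← hcdef]
    constructor
    · exact div_nonneg (by linarith) hc0.le
    · rw [div_le_one hc0, hcdef]
      linarith
  have hWnn : ∀ k ∈ Finset.range (m + 2), 0 ≤ pqW pp qq (m + 1) k x :=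
    fun k _ => pqW_nonneg hq0 hqp' (m + 1) k hx0 hx1
  have hsum1 : ∑ k ∈ Finset.range (m + 2), pqW pp qq (m + 1) k x = P := by
    rw [hPdef]; exact sum_pqW hp0 hq0 (m + 1) x
  -- pointwise modulus bound
  have key : ∀ s ∈ Set.Icc (0 : ℝ) 1,
      |f s - f x| ≤ ε / 2 + (2 * M / δ ^ 2) * (s - x) ^ 2 := by
    intro s hs
    by_cases hd : |s - x| < δ
    · have h1 := hδ s hs x ⟨hx0, hx1⟩ (by rwa [Real.dist_eq])
      rw [Real.dist_eq] at h1
      have h2 : 0 ≤ (2 * M / δ ^ 2) * (s - x) ^ 2 := by positivity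
      linarith
    · push_neg at hd
      have h1 : |f s - f x| ≤ 2 * M := by
        have hs1 := hM s hs
        have hs2 := hM x ⟨hx0, hx1⟩
        rw [Real.norm_eq_abs] at hs1 hs2
        calc |f s - f x| ≤ |f s| + |f x| := abs_sub _ _
          _ ≤ 2 * M := by linarith
      have h2 : δ ^ 2 ≤ (s - x) ^ 2 := by
        rw [← sq_abs (s - x)]
        exact pow_le_pow_left₀ hδ0.le hd 2
      have h3 : 2 * M ≤ (2 * M / δ ^ 2) * (s - x) ^ 2 := by
        rw [div_mul_eq_mul_div, le_div_iff₀ (by positivity)]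
        have := mul_le_mul_of_nonneg_left h2 (by linarith : (0:ℝ) ≤ 2 * M)
        linarith
      linarith
  -- rewrite the operator
  have hrw : pqStancu pp qq α β (m + 1) f x - f x
      = ∑ k ∈ Finset.range (m + 2),
          (pqW pp qq (m + 1) k x / P) * (f (pqNode pp qq α β (m + 1) k) - f x) := by
    rw [pqStancu]
    rw [Finset.sum_congr rfl fun k hk => by rw [hbasis k hk]]
    simp only [mul_sub]
    rw [Finset.sum_sub_distrib, ← Finset.sum_mul, ← Finset.sum_div, hsum1,
      div_self hPne, one_mul]
  rw [hrw]
  have step1 : |∑ k ∈ Finset.range (m + 2),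
        (pqW pp qq (m + 1) k x / P) * (f (pqNode pp qq α β (m + 1) k) - f x)|
      ≤ ∑ k ∈ Finset.range (m + 2),
          (pqW pp qq (m + 1) k x / P)
            * (ε / 2 + (2 * M / δ ^ 2) * (pqNode pp qq α β (m + 1) k - x) ^ 2) := by
    refine (Finset.abs_sum_le_sum_abs _ _).trans (Finset.sum_le_sum fun k hk => ?_)
    rw [abs_mul, abs_of_nonneg (div_nonneg (hWnn k hk) hP0.le)]
    exact mul_le_mul_of_nonneg_left (key _ (hnode k hk))
      (div_nonneg (hWnn k hk) hP0.le)
  have step2 : ∑ k ∈ Finset.range (m + 2),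
        (pqW pp qq (m + 1) k x / P)
          * (ε / 2 + (2 * M / δ ^ 2) * (pqNode pp qq α β (m + 1) k - x) ^ 2)
      = ε / 2 + (2 * M / δ ^ 2)
          * ((∑ k ∈ Finset.range (m + 2),
              pqW pp qq (m + 1) k x * (pqNode pp qq α β (m + 1) k - x) ^ 2) / P) := by
    have hcg : ∀ k ∈ Finset.range (m + 2),
        (pqW pp qq (m + 1) k x / P)
            * (ε / 2 + (2 * M / δ ^ 2) * (pqNode pp qq α β (m + 1) k - x) ^ 2)
          = pqW pp qq (m + 1) k x * (ε / 2) / P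
            + (2 * M / δ ^ 2)
                * (pqW pp qq (m + 1) k x * (pqNode pp qq α β (m + 1) k - x) ^ 2) / P := by
      intro k _
      field_simp
    rw [Finset.sum_congr rfl hcg, Finset.sum_add_distrib, ← Finset.sum_div,
      ← Finset.sum_mul, hsum1, ← Finset.sum_div, ← Finset.mul_sum, mul_div_assoc,
      mul_div_assoc]
    have hPe : P * (ε / 2 / P) = ε / 2 := by
      field_simp
    rw [hPe]
  -- central moment estimate
  have hcent := sum_pqW_central hp0 hq0 m x α β
    (by rw [← hJdef, ← hcdef]; exact hcne)
  rw [← hJdef, ← hcdef, ← hPdef] at hcent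
  have hE := central_bound hp0 hq0 m hx0 hx1 hα hαβ (by rw [← hJdef]; exact hJ1) hp1
  rw [← hJdef, ← hcdef] at hE
  obtain ⟨E, hEdef⟩ : ∃ E : ℝ, E = qq * J * pqInt pp qq m * x ^ 2 + pp ^ m * J * x
      + 2 * (α - c * x) * (J * x) + (α - c * x) ^ 2 := ⟨_, rfl⟩
  rw [← hEdef] at hE hcent
  have hEnn : 0 ≤ E := by
    have h0 : 0 ≤ ∑ k ∈ Finset.range (m + 2),
        pqW pp qq (m + 1) k x * (pqNode pp qq α β (m + 1) k - x) ^ 2 :=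
      Finset.sum_nonneg fun k hk => mul_nonneg (hWnn k hk) (sq_nonneg _)
    rw [hcent] at h0
    have h1 : 0 ≤ E * P := by
      rcases div_nonneg_iff.mp h0 with ⟨h, _⟩ | ⟨_, hb⟩
      · exact h
      · exact absurd hb (not_le.mpr (by positivity))
    exact le_of_mul_le_mul_right (by linarith) hP0
  have hfrac : (∑ k ∈ Finset.range (m + 2),
        pqW pp qq (m + 1) k x * (pqNode pp qq α β (m + 1) k - x) ^ 2) / P
      = E / c ^ 2 := by
    rw [hcent]
    field_simp
  have h5 : E / c ^ 2 ≤ (α ^ 2 + β ^ 2 + 1) / J := by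
    rw [div_le_div_iff₀ (by positivity) hJ0]
    have hJc : J ≤ c := by rw [hcdef]; linarith
    have hA : (0 : ℝ) ≤ α ^ 2 + β ^ 2 := by positivity
    have hc1 : (1 : ℝ) ≤ c := by linarith
    have hJcc : J ≤ c ^ 2 := by
      have h1 := mul_nonneg hc0.le (sub_nonneg.2 hc1)
      linarith [h1]
    have hsq : J * J ≤ c ^ 2 := by
      have h1 := mul_le_mul hJc hJc hJ0.le hc0.le
      linarith [h1]
    have e1 : (α ^ 2 + β ^ 2) * J ≤ (α ^ 2 + β ^ 2) * c ^ 2 :=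
      mul_le_mul_of_nonneg_left hJcc hA
    calc E * J ≤ (α ^ 2 + β ^ 2 + J / 4) * J := mul_le_mul_of_nonneg_right hE hJ0.le
      _ = (α ^ 2 + β ^ 2) * J + J * J / 4 := by ring
      _ ≤ (α ^ 2 + β ^ 2) * c ^ 2 + c ^ 2 / 4 := by linarith
      _ ≤ (α ^ 2 + β ^ 2 + 1) * c ^ 2 := by linarith [sq_nonneg c]
  have hlt : (2 * M / δ ^ 2) * ((α ^ 2 + β ^ 2 + 1) / J) < ε / 2 := by
    rw [div_mul_div_comm, div_lt_iff₀ (by positivity)]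
    have hZmul : Z * (δ ^ 2 * ε) = 4 * M * (α ^ 2 + β ^ 2 + 1) := by
      rw [hZdef]; field_simp
    have hpos : (0 : ℝ) < δ ^ 2 * ε := by positivity
    have hmul := mul_le_mul_of_nonneg_left hJZ
      (le_of_lt (by positivity : (0:ℝ) < δ ^ 2 * ε / 2))
    linarith [hZmul, hmul, hpos]
  calc |∑ k ∈ Finset.range (m + 2),
        (pqW pp qq (m + 1) k x / P) * (f (pqNode pp qq α β (m + 1) k) - f x)|
      ≤ ∑ k ∈ Finset.range (m + 2),
          (pqW pp qq (m + 1) k x / P)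
            * (ε / 2 + (2 * M / δ ^ 2) * (pqNode pp qq α β (m + 1) k - x) ^ 2) := step1
    _ = ε / 2 + (2 * M / δ ^ 2)
          * ((∑ k ∈ Finset.range (m + 2),
              pqW pp qq (m + 1) k x * (pqNode pp qq α β (m + 1) k - x) ^ 2) / P) := step2
    _ ≤ ε / 2 + (2 * M / δ ^ 2) * ((α ^ 2 + β ^ 2 + 1) / J) := by
        rw [hfrac]
        have hmul := mul_le_mul_of_nonneg_left h5
          (by positivity : (0:ℝ) ≤ 2 * M / δ ^ 2)
        linarith
    _ < ε := by linarith
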